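/- A nested weighted automaton with bidirectional slave automata does not have finite width if and only if it has an accepting run in which, at some position i, infinitely many backward-walking slave automata terminate. -/

import Mathlib

open scoped Classical BigOperators

namespace NWAF

def natToBits (n : ℕ) : List Bool := Nat.bits n

/-! ## Nested weighted automata with bidirectional slave automata.

Words are infinite sequences `ℕ → ℕ` of letters `< alpha`.  A slave automaton
is a nondeterministic weighted automaton over finite words (states `Fin n`,
transitions carry an integer weight).  A nested weighted automaton (NWA)
consists of a master Büchi automaton whose transitions are labelled by
indices of slave automata, each slave being forward- or backward-walking. -/

inductive Dir
  | fwd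
  | bwd
deriving DecidableEq

structure Slave where
  n : ℕ
  init : Finset (Fin n)
  trans : Finset (Fin n × ℕ × ℤ × Fin n)
  final : Finset (Fin n)

def Slave.Tr (s : Slave) (q a : ℕ) (z : ℤ) (q' : ℕ) : Prop :=
  ∃ (h : q < s.n) (h' : q' < s.n), (⟨q, h⟩, a, z, ⟨q', h'⟩) ∈ s.trans

def Slave.IsInit (s : Slave) (q : ℕ) : Prop := ∃ h : q < s.n, ⟨q, h⟩ ∈ s.init

def Slave.IsFinal (s : Slave) (q : ℕ) : Prop := ∃ h : q < s.n, ⟨q, h⟩ ∈ s.final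

def Slave.size (s : Slave) : ℕ := s.n + s.trans.card + 1

def Slave.maxWt (s : Slave) : ℕ := s.trans.sup fun t => t.2.2.1.natAbs

structure NWA where
  alpha : ℕ
  mn : ℕ
  minit : Finset (Fin mn)
  mtrans : Finset (Fin mn × ℕ × ℕ × Fin mn)
  mfinal : Finset (Fin mn)
  slaves : List (Dir × Slave)

def NWA.size (A : NWA) : ℕ :=
  A.alpha + A.mn + A.mtrans.card + (A.slaves.map fun ds => ds.2.size).sum + 1

def NWA.maxWt (A : NWA) : ℕ := (A.slaves.map fun ds => ds.2.maxWt).foldr max 0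

/-- Number of slave states (the size of the disjoint union `Q_s`). -/
def NWA.slaveStates (A : NWA) : ℕ := (A.slaves.map fun ds => ds.2.n).sum

/-- Number of configurations of an NWA: a configuration is a master state
together with a set of states of active slave automata. -/
def confNum (A : NWA) : ℕ := A.mn * 2 ^ A.slaveStates

def ValidWord (A : NWA) (w : ℕ → ℕ) : Prop := ∀ i, w i < A.alpha

/-- A (candidate) run of an NWA: a master run, at every position the index of
the invoked slave automaton, and the run (sequence of states, coded as
naturals) and the sequence of chosen weights of the invoked slave. -/
structure Run (A : NWA) where
  m : ℕ → Fin A.mn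
  lbl : ℕ → ℕ
  sr : ℕ → List ℕ
  sw : ℕ → List ℤ

/-- The `t`-th letter read by a slave automaton of direction `d`
invoked at position `i`. -/
def slaveLetter (w : ℕ → ℕ) (d : Dir) (i t : ℕ) : ℕ :=
  match d with
  | Dir.fwd => w (i + t)
  | Dir.bwd => w (i - t)

def SlaveRunOK (A : NWA) (w : ℕ → ℕ) (ρ : Run A) (i : ℕ) : Prop :=
  ∃ ds ∈ A.slaves[ρ.lbl i]?,
    (ρ.sr i).length = (ρ.sw i).length + 1 ∧
    (ds.1 = Dir.bwd → (ρ.sw i).length ≤ i + 1) ∧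
    (∃ q0 ∈ (ρ.sr i).head?, ds.2.IsInit q0) ∧
    (∃ qf ∈ (ρ.sr i).getLast?, ds.2.IsFinal qf) ∧
    (∀ t, ∀ z ∈ (ρ.sw i)[t]?, ∀ q ∈ (ρ.sr i)[t]?, ∀ q' ∈ (ρ.sr i)[t + 1]?,
      ds.2.Tr q (slaveLetter w ds.1 i t) z q')

/-- An invocation is non-silent if the slave run takes at least one
transition (a slave run of length one returns the silent value `⊥`). -/
def NonSilent {A : NWA} (ρ : Run A) (i : ℕ) : Prop := 1 < (ρ.sr i).length

def IsRun (A : NWA) (w : ℕ → ℕ) (ρ : Run A) : Prop :=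
  ValidWord A w ∧ ρ.m 0 ∈ A.minit ∧
  (∀ i, (ρ.m i, w i, ρ.lbl i, ρ.m (i + 1)) ∈ A.mtrans) ∧
  ∀ i, SlaveRunOK A w ρ i

def IsAccRun (A : NWA) (w : ℕ → ℕ) (ρ : Run A) : Prop :=
  IsRun A w ρ ∧ (∀ N, ∃ i, N ≤ i ∧ ρ.m i ∈ A.mfinal) ∧
  (∀ N, ∃ i, N ≤ i ∧ NonSilent ρ i)

/-- The average of the values (under the slave value function `g`) returned
by the non-silent slave invocations among the first `k` positions. -/
noncomputable def partialAvg (g : List ℤ → ℝ) {A : NWA} (ρ : Run A) (k : ℕ) : ℝ :=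
  (∑ i ∈ Finset.range k, if NonSilent ρ i then g (ρ.sw i) else 0) /
    (((Finset.range k).filter fun i => NonSilent ρ i).card : ℝ)

/-- The `LimAvg` value of a run: the limit inferior of the partial averages
of the values returned by the non-silent slave invocations. -/
noncomputable def runValue (g : List ℤ → ℝ) {A : NWA} (ρ : Run A) : EReal :=
  Filter.liminf (fun k => ((partialAvg g ρ k : ℝ) : EReal)) Filter.atTop

/-- The value of a word: the infimum over all accepting runs
(`⊤` if there is none). -/
noncomputable def NWA.value (g : List ℤ → ℝ) (A : NWA) (w : ℕ → ℕ) : EReal :=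
  sInf {v | ∃ ρ : Run A, IsAccRun A w ρ ∧ v = runValue g ρ}

/-- The infimum of the values of all infinite words. -/
noncomputable def NWA.einf (g : List ℤ → ℝ) (A : NWA) : EReal := ⨅ w, NWA.value g A w

/-! ### Value functions for slave automata -/

def SumVF : List ℤ → ℝ := fun ζ => ((ζ.sum : ℤ) : ℝ)

def sumPlusN (ζ : List ℤ) : ℕ := (ζ.map Int.natAbs).sum

def SumPlusVF : List ℤ → ℝ := fun ζ => ((sumPlusN ζ : ℕ) : ℝ)

def MinVF : List ℤ → ℝ
  | [] => 0
  | a :: l => ((l.foldl min a : ℤ) : ℝ)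

def MaxVF : List ℤ → ℝ
  | [] => 0
  | a :: l => ((l.foldl max a : ℤ) : ℝ)

/-- A variant of the bounded sum value function: returns the sum provided all
partial sums stay in the interval `[L, U]`, and a fixed fallback value
otherwise. -/
noncomputable def BSumVF (L U : ℤ) (fb : ℝ) : List ℤ → ℝ := fun ζ =>
  if ∀ t, L ≤ (ζ.take t).sum ∧ (ζ.take t).sum ≤ U then ((ζ.sum : ℤ) : ℝ) else fb

def IsMinMaxBSum (g : List ℤ → ℝ) : Prop :=
  g = MinVF ∨ g = MaxVF ∨ ∃ L U fb, g = BSumVF L U fb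

/-! ### Active slave automata, width, directions, determinism -/

/-- The slave automaton invoked at position `j` is active at position `p`
(its run covers the letter at position `p`). -/
def ActiveAt (A : NWA) (ρ : Run A) (j p : ℕ) : Prop :=
  ∃ ds ∈ A.slaves[ρ.lbl j]?,
    (ds.1 = Dir.fwd ∧ j ≤ p ∧ p < j + (ρ.sw j).length) ∨
    (ds.1 = Dir.bwd ∧ p ≤ j ∧ j < p + (ρ.sw j).length)

def HasWidth (A : NWA) (k : ℕ) : Prop :=
  ∀ w (ρ : Run A), IsRun A w ρ → ∀ p,
    {j | ActiveAt A ρ j p}.Finite ∧ {j | ActiveAt A ρ j p}.ncard ≤ k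

def FiniteWidth (A : NWA) : Prop :=
  ∀ w (ρ : Run A), IsAccRun A w ρ → ∀ p, {j | ActiveAt A ρ j p}.Finite

def ForwardOnly (A : NWA) : Prop := ∀ ds ∈ A.slaves, ds.1 = Dir.fwd

def BackwardOnly (A : NWA) : Prop := ∀ ds ∈ A.slaves, ds.1 = Dir.bwd

def Slave.Det (s : Slave) : Prop :=
  s.init.card ≤ 1 ∧
  (∀ q a z q' z' q'', s.Tr q a z q' → s.Tr q a z' q'' → z = z' ∧ q' = q'') ∧
  (∀ q, s.IsFinal q → ∀ a z q', ¬ s.Tr q a z q')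

def NWA.Det (A : NWA) : Prop :=
  A.minit.card ≤ 1 ∧
  (∀ t ∈ A.mtrans, ∀ t' ∈ A.mtrans, t.1 = t'.1 → t.2.1 = t'.2.1 → t = t') ∧
  ∀ ds ∈ A.slaves, ds.2.Det

/-- The bound `N = (|Q_s| + 2) · conf(A) · |Q_s| ^ (2 |Q_s|)` on the length of
barriers. -/
def barrierBound (A : NWA) : ℕ :=
  (A.slaveStates + 2) * confNum A * A.slaveStates ^ (2 * A.slaveStates)

/-! ### Encodings of NWA instances as bit strings -/

/-- Binary encoding of an integer weight. -/
def intBin (z : ℤ) : ℕ := Encodable.encode z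

/-- Unary encoding of an integer weight. -/
def intUnary (z : ℤ) : ℕ := Encodable.encode (decide (0 ≤ z), List.replicate z.natAbs true)

noncomputable def Slave.codeWith (s : Slave) (wtCode : ℤ → ℕ) : ℕ :=
  Encodable.encode
    (s.n, s.init.toList.map Fin.val,
      s.trans.toList.map fun t => ((t.1 : ℕ), t.2.1, wtCode t.2.2.1, (t.2.2.2 : ℕ)),
      s.final.toList.map Fin.val)

noncomputable def Slave.codeBin (s : Slave) : ℕ := s.codeWith intBin

noncomputable def Slave.codeUnary (s : Slave) : ℕ := s.codeWith intUnary

def Dir.code : Dir → Bool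
  | Dir.fwd => true
  | Dir.bwd => false

noncomputable def NWA.codeWith (A : NWA) (slaveCode : Slave → ℕ) : ℕ :=
  Encodable.encode
    (A.alpha, A.mn,
      A.minit.toList.map Fin.val,
      A.mtrans.toList.map fun t => ((t.1 : ℕ), t.2.1, t.2.2.1, (t.2.2.2 : ℕ)),
      A.mfinal.toList.map Fin.val,
      A.slaves.map fun ds => (ds.1.code, slaveCode ds.2))

/-- Encoding of an instance (an NWA together with a rational threshold),
with weights of slave automata encoded in binary. -/
noncomputable def encInstBin (A : NWA) (q : ℚ) : List Bool :=
  natToBits (Encodable.encode (A.codeWith Slave.codeBin, Encodable.encode q))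

/-- Encoding of an instance, with weights of slave automata encoded in unary. -/
noncomputable def encInstUnary (A : NWA) (q : ℚ) : List Bool :=
  natToBits (Encodable.encode (A.codeWith Slave.codeUnary, Encodable.encode q))

/-- The emptiness property: some word has value at most the threshold. -/
def EmptyAt (g : List ℤ → ℝ) (A : NWA) (q : ℚ) : Prop :=
  ∃ w, ValidWord A w ∧ NWA.value g A w ≤ ((q : ℝ) : EReal)

/-- The emptiness problem, as a language of encoded instances, restricted to
NWAs satisfying `P`. -/
def EmptinessLang (g : List ℤ → ℝ) (enc : NWA → ℚ → List Bool) (P : NWA → Prop) :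
    Set (List Bool) :=
  {y | ∃ A q, P A ∧ y = enc A q ∧ EmptyAt g A q}

/-- The backward-walking slave automaton invoked at position `j` terminates at
position `i` (the leftmost position reached by its run is `i`). -/
def BwdTermAt (A : NWA) (ρ : Run A) (j i : ℕ) : Prop :=
  ∃ ds ∈ A.slaves[ρ.lbl j]?, ds.1 = Dir.bwd ∧ i ≤ j ∧ j + 1 = i + (ρ.sw j).length

/-! A slave active at position `p` was either invoked at one of the finitely many positions
`j ≤ p`, or walks backward from some `j > p` and terminates at one of the finitely many positions
`i ≤ p`. Hence the active sets are all finite unless infinitely many backward slaves terminate at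
one position, and conversely each of those is active there. -/

theorem BwdTermAt.activeAt {A : NWA} {ρ : Run A} {j i : ℕ} (h : BwdTermAt A ρ j i) :
    ActiveAt A ρ j i := by
  obtain ⟨ds, hds, hd, hij, hlen⟩ := h
  exact ⟨ds, hds, Or.inr ⟨hd, hij, by omega⟩⟩

/-- The termination position `j + 1 - length` involves no truncation: `IsRun` bounds the length
of a backward run invoked at `j` by `j + 1`. -/
theorem IsRun.exists_bwdTermAt_of_activeAt {A : NWA} {w : ℕ → ℕ} {ρ : Run A}
    (hρ : IsRun A w ρ) {j p : ℕ} (h : ActiveAt A ρ j p) (hpj : p < j) :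
    ∃ i ≤ p, BwdTermAt A ρ j i := by
  obtain ⟨ds, hds, ⟨-, hjp, -⟩ | ⟨hd, -, hjlen⟩⟩ := h
  · omega
  obtain ⟨ds', hds', -, hbwd, -⟩ := hρ.2.2.2 j
  obtain rfl : ds' = ds := Option.mem_unique hds' hds
  have hlen : (ρ.sw j).length ≤ j + 1 := hbwd hd
  exact ⟨j + 1 - (ρ.sw j).length, by omega, ds', hds', hd, by omega, by omega⟩

theorem IsRun.setOf_activeAt_subset {A : NWA} {w : ℕ → ℕ} {ρ : Run A} (hρ : IsRun A w ρ)
    (p : ℕ) :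
    {j | ActiveAt A ρ j p} ⊆ Set.Iic p ∪ ⋃ i ∈ Set.Iic p, {j | BwdTermAt A ρ j i} := by
  intro j hj
  rcases le_or_gt j p with hjp | hpj
  · exact Or.inl hjp
  · obtain ⟨i, hip, hi⟩ := hρ.exists_bwdTermAt_of_activeAt hj hpj
    exact Or.inr (Set.mem_biUnion (Set.mem_Iic.mpr hip) hi)

theorem IsRun.finite_setOf_activeAt {A : NWA} {w : ℕ → ℕ} {ρ : Run A} (hρ : IsRun A w ρ)
    {p : ℕ} (hfin : ∀ i ≤ p, {j | BwdTermAt A ρ j i}.Finite) :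
    {j | ActiveAt A ρ j p}.Finite :=
  ((Set.finite_Iic p).union ((Set.finite_Iic p).biUnion hfin)).subset
    (hρ.setOf_activeAt_subset p)

/-- An NWA with bidirectional slave automata does not have finite width if
and only if it has an accepting run in which, at some position `i`,
infinitely many backward-walking slave automata terminate. -/
theorem statement_3 (A : NWA) :
    ¬ FiniteWidth A ↔
      ∃ (w : ℕ → ℕ) (ρ : Run A), IsAccRun A w ρ ∧
        ∃ i, {j | BwdTermAt A ρ j i}.Infinite := by
  constructor
  · intro h
    simp only [FiniteWidth, not_forall] at h
    obtain ⟨w, ρ, hacc, p, hp⟩ := h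
    refine ⟨w, ρ, hacc, ?_⟩
    by_contra! hfin
    exact hp (hacc.1.finite_setOf_activeAt fun i _ => hfin i)
  · rintro ⟨w, ρ, hacc, i, hinf⟩ hfw
    exact hinf ((hfw w ρ hacc i).subset fun _ hj => BwdTermAt.activeAt hj)

end NWAF
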